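/- arXiv:2209.14381 — 2 statements merged into one kernel-verified Lean document; each statement's English description precedes it below -/
import Mathlib

section
/- Let E be a Riesz space and let p, q : ℕ → ℕ satisfy the deferred property. The deferred statistical order limit is linear: if x_n →^{D_{st_o}}_{p,q} x and y_n →^{D_{st_o}}_{p,q} y in E and λ ∈ ℝ, then (x_n + y_n) →^{D_{st_o}}_{p,q} (x + y) and (λ x_n) →^{D_{st_o}}_{p,q} λ x. -/
open Filter Topology

variable {E : Type*} [AddCommGroup E] [Lattice E]
  [CovariantClass E E (· + ·) (· ≤ ·)] [Module ℝ E] [PosSMulMono ℝ E]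

/-- `p` and `q` satisfy the deferred property: `p n < q n` for all `n` and `q n → ∞`. -/
def DeferredProperty (p q : ℕ → ℕ) : Prop :=
  (∀ n, p n < q n) ∧ Tendsto q atTop atTop

open Classical in
/-- The ratio `|{k ∈ K : p n < k ≤ q n}| / (q n - p n)`. -/
noncomputable def deferredRatio (p q : ℕ → ℕ) (K : Set ℕ) (n : ℕ) : ℝ :=
  (((Finset.Ioc (p n) (q n)).filter (fun k => k ∈ K)).card : ℝ) / ((q n : ℝ) - (p n : ℝ))

/-- The deferred density of `K ⊆ ℕ` is `a`. -/
def DeferredDensity (p q : ℕ → ℕ) (K : Set ℕ) (a : ℝ) : Prop :=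
  Tendsto (deferredRatio p q K) atTop (nhds a)

/-- `z` is deferred statistical order decreasing to `0`: there is an (infinite) set
`K = {k₁ < k₂ < ⋯}` of deferred density one along which `z` is decreasing with infimum `0`. -/
def DStatDecreasing (p q : ℕ → ℕ) (z : ℕ → E) : Prop :=
  ∃ K : Set ℕ, K.Infinite ∧ DeferredDensity p q K 1 ∧
    (∀ i ∈ K, ∀ j ∈ K, i ≤ j → z j ≤ z i) ∧ IsGLB (z '' K) 0

/-- `x` is deferred statistical order convergent to `l`. -/
def DStatOrderConv (p q : ℕ → ℕ) (x : ℕ → E) (l : E) : Prop :=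
  ∃ z : ℕ → E, DStatDecreasing p q z ∧
    ∃ K : Set ℕ, K.Infinite ∧ DeferredDensity p q K 1 ∧ ∀ k ∈ K, |x k - l| ≤ z k

/-!
Sets of deferred density one are closed under finite intersections (inclusion–exclusion in each
window `(p n, q n]`), and they are infinite because `q n → ∞`: a set contained in `[0, m]` has
ratio at most `m / q n`. For the sum, the witness `z₁ + z₂` on `K₁ ∩ K₂` works: each `zᵢ` is
antitone, so restricting it to this cofinal subset keeps its infimum `0`, and the infimum of a sum
of antitone families is the sum of the infima. For `λ • x`, the witness is `|λ| • z`, since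
`|λ • v| = |λ| • |v|` in any Riesz space.
-/

section DeferredDensity

variable {p q : ℕ → ℕ}

open Classical in
theorem deferredRatio_eq_card_div_card (K : Set ℕ) (n : ℕ) :
    deferredRatio p q K n =
      (((Finset.Ioc (p n) (q n)).filter (· ∈ K)).card : ℝ) / (Finset.Ioc (p n) (q n)).card := by
  rw [deferredRatio, Nat.card_Ioc]
  rcases le_total (p n) (q n) with h | h
  · rw [Nat.cast_sub h]
  · simp [Finset.Ioc_eq_empty_of_le h]

theorem deferredRatio_nonneg (K : Set ℕ) (n : ℕ) : 0 ≤ deferredRatio p q K n := by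
  rw [deferredRatio_eq_card_div_card]
  positivity

theorem deferredRatio_mono {K L : Set ℕ} (h : K ⊆ L) (n : ℕ) :
    deferredRatio p q K n ≤ deferredRatio p q L n := by
  classical
  simp only [deferredRatio_eq_card_div_card]
  gcongr

theorem deferredRatio_add_le_inter_add_one (K L : Set ℕ) (n : ℕ) :
    deferredRatio p q K n + deferredRatio p q L n ≤ deferredRatio p q (K ∩ L) n + 1 := by
  classical
  simp only [deferredRatio_eq_card_div_card]
  set s := Finset.Ioc (p n) (q n)
  rcases (Nat.zero_le s.card).eq_or_lt with hs | hs
  · simp [← hs]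
  have hunion : (s.filter (· ∈ K) ∪ s.filter (· ∈ L)).card ≤ s.card :=
    Finset.card_le_card (Finset.union_subset (Finset.filter_subset _ _) (Finset.filter_subset _ _))
  have hsum := Finset.card_union_add_card_inter (s.filter (· ∈ K)) (s.filter (· ∈ L))
  simp only [Set.mem_inter_iff, Finset.filter_and]
  rw [← add_div, div_add_one (by positivity), div_le_div_iff_of_pos_right (by positivity)]
  exact_mod_cast (by omega : (s.filter (· ∈ K)).card + (s.filter (· ∈ L)).card ≤
    (s.filter (· ∈ K) ∩ s.filter (· ∈ L)).card + s.card)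

theorem DeferredDensity.inter {K L : Set ℕ} (hK : DeferredDensity p q K 1)
    (hL : DeferredDensity p q L 1) : DeferredDensity p q (K ∩ L) 1 := by
  have hlower :
      Tendsto (fun n => deferredRatio p q K n + deferredRatio p q L n - 1) atTop (𝓝 1) := by
    simpa using (hK.add hL).sub_const 1
  exact tendsto_of_tendsto_of_tendsto_of_le_of_le hlower hK
    (fun n => by linarith [deferredRatio_add_le_inter_add_one (p := p) (q := q) K L n])
    (fun n => deferredRatio_mono Set.inter_subset_left n)

theorem deferredRatio_Iic_le {m n : ℕ} (h : m ≤ q n) :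
    deferredRatio p q (Set.Iic m) n ≤ m / q n := by
  rw [deferredRatio_eq_card_div_card, Nat.card_Ioc]
  calc _ ≤ ((m - p n : ℕ) : ℝ) / (q n - p n : ℕ) := by
        gcongr
        rw [← Nat.card_Ioc]
        exact Finset.card_le_card fun k hk => by simp at hk ⊢; omega
    _ ≤ m / q n := by
        rcases le_or_gt m (p n) with hmp | hpm
        · simp only [Nat.sub_eq_zero_of_le hmp, CharP.cast_eq_zero, zero_div]
          positivity
        have : (p n : ℝ) < m := by exact_mod_cast hpm
        have : (m : ℝ) ≤ q n := by exact_mod_cast h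
        rw [Nat.cast_sub hpm.le, Nat.cast_sub (hpm.le.trans h),
          div_le_div_iff₀ (by linarith) (by linarith)]
        nlinarith

theorem DeferredDensity.infinite (hq : Tendsto q atTop atTop) {K : Set ℕ}
    (hK : DeferredDensity p q K 1) : K.Infinite := by
  intro hfin
  obtain ⟨m, hm⟩ := hfin.bddAbove
  have hbound : Tendsto (fun n => (m : ℝ) / q n) atTop (𝓝 0) :=
    tendsto_const_nhds.div_atTop (tendsto_natCast_atTop_atTop.comp hq)
  have hzero : Tendsto (deferredRatio p q K) atTop (𝓝 0) :=
    tendsto_of_tendsto_of_tendsto_of_le_of_le' tendsto_const_nhds hbound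
      (Eventually.of_forall (deferredRatio_nonneg K))
      ((hq.eventually_ge_atTop m).mono fun n hn =>
        (deferredRatio_mono hm n).trans (deferredRatio_Iic_le hn))
  exact one_ne_zero (tendsto_nhds_unique hK hzero)

end DeferredDensity

section Infimum

variable {ι α : Type*}

theorem AntitoneOn.isGLB_image_of_cofinal [Preorder ι] [Preorder α] {z : ι → α} {K L : Set ι}
    {a : α} (hz : AntitoneOn z K) (hLK : L ⊆ K) (hL : ∀ k ∈ K, ∃ m ∈ L, k ≤ m)
    (h : IsGLB (z '' K) a) : IsGLB (z '' L) a := by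
  refine ⟨lowerBounds_mono_set (Set.image_mono hLK) h.1, fun w hw => h.2 ?_⟩
  rintro _ ⟨k, hk, rfl⟩
  obtain ⟨m, hm, hkm⟩ := hL k hk
  exact (hw ⟨m, hm, rfl⟩).trans (hz hk (hLK hm) hkm)

theorem AntitoneOn.isGLB_image_add [LinearOrder ι] [AddCommGroup α] [PartialOrder α]
    [AddLeftMono α] {z₁ z₂ : ι → α} {s : Set ι} {a b : α} (hz₁ : AntitoneOn z₁ s)
    (hz₂ : AntitoneOn z₂ s) (h₁ : IsGLB (z₁ '' s) a) (h₂ : IsGLB (z₂ '' s) b) :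
    IsGLB ((fun k => z₁ k + z₂ k) '' s) (a + b) := by
  refine ⟨?_, fun w hw => ?_⟩
  · rintro _ ⟨k, hk, rfl⟩
    exact add_le_add (h₁.1 ⟨k, hk, rfl⟩) (h₂.1 ⟨k, hk, rfl⟩)
  -- evaluate the lower bound `w` at `max k l` to decouple the two indices
  have hsplit : ∀ k ∈ s, ∀ l ∈ s, w - z₂ l ≤ z₁ k := fun k hk l hl => by
    have hm : max k l ∈ s := by rcases max_choice k l with h | h <;> rw [h] <;> assumption
    refine sub_le_iff_le_add.2 ((hw ⟨_, hm, rfl⟩).trans ?_)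
    exact add_le_add (hz₁ hk hm (le_max_left k l)) (hz₂ hl hm (le_max_right k l))
  have hwa : ∀ l ∈ s, w - a ≤ z₂ l := fun l hl =>
    sub_le_comm.1 (h₁.2 (by rintro _ ⟨k, hk, rfl⟩; exact hsplit k hk l hl))
  exact sub_le_iff_le_add'.1 (h₂.2 (by rintro _ ⟨l, hl, rfl⟩; exact hwa l hl))

theorem IsGLB.image_smul_of_nonneg {𝕜 M : Type*} [Field 𝕜] [LinearOrder 𝕜]
    [IsStrictOrderedRing 𝕜] [AddCommGroup M] [PartialOrder M] [Module 𝕜 M] [PosSMulMono 𝕜 M]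
    {z : ι → M} {s : Set ι} {a : M} {c : 𝕜} (hc : 0 ≤ c) (hs : s.Nonempty)
    (h : IsGLB (z '' s) a) : IsGLB ((fun k => c • z k) '' s) (c • a) := by
  rcases hc.eq_or_lt with rfl | hc
  · simp [hs.image_const]
  · simpa [Set.image_image] using (OrderIso.smulRight hc).isGLB_image'.2 h

end Infimum

theorem abs_smul_of_lattice {𝕜 M : Type*} [Field 𝕜] [LinearOrder 𝕜] [IsStrictOrderedRing 𝕜]
    [AddCommGroup M] [Lattice M] [Module 𝕜 M] [PosSMulMono 𝕜 M] (c : 𝕜) (v : M) :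
    |c • v| = |c| • |v| := by
  have hpos : ∀ c : 𝕜, 0 < c → ∀ v : M, |c • v| = c • |v| := fun c hc v => by
    rw [abs, abs, ← smul_neg]
    exact ((OrderIso.smulRight hc).map_sup v (-v)).symm
  rcases lt_trichotomy c 0 with hc | rfl | hc
  · rw [← neg_smul_neg, hpos _ (neg_pos.2 hc), abs_neg, abs_of_neg hc]
  · simp [abs]
  · rw [hpos c hc, abs_of_pos hc]

section DeferredStatisticalOrder

variable {p q : ℕ → ℕ} {M : Type*} [AddCommGroup M] [Lattice M]

theorem DStatDecreasing.add [AddLeftMono M] (hq : Tendsto q atTop atTop) {z₁ z₂ : ℕ → M}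
    (h₁ : DStatDecreasing p q z₁) (h₂ : DStatDecreasing p q z₂) :
    DStatDecreasing p q (fun k => z₁ k + z₂ k) := by
  obtain ⟨K₁, -, hK₁, hz₁, hglb₁⟩ := h₁
  obtain ⟨K₂, -, hK₂, hz₂, hglb₂⟩ := h₂
  have hK : DeferredDensity p q (K₁ ∩ K₂) 1 := hK₁.inter hK₂
  have hcofinal : ∀ k : ℕ, ∃ m ∈ K₁ ∩ K₂, k ≤ m := fun k =>
    ((hK.infinite hq).exists_gt k).imp fun _ ⟨hm, hkm⟩ => ⟨hm, hkm.le⟩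
  have hanti₁ : AntitoneOn z₁ K₁ := fun i hi j hj hij => hz₁ i hi j hj hij
  have hanti₂ : AntitoneOn z₂ K₂ := fun i hi j hj hij => hz₂ i hi j hj hij
  refine ⟨K₁ ∩ K₂, hK.infinite hq, hK,
    fun i hi j hj hij => add_le_add (hz₁ i hi.1 j hj.1 hij) (hz₂ i hi.2 j hj.2 hij), ?_⟩
  simpa using (hanti₁.mono Set.inter_subset_left).isGLB_image_add
    (hanti₂.mono Set.inter_subset_right)
    (hanti₁.isGLB_image_of_cofinal Set.inter_subset_left (fun k _ => hcofinal k) hglb₁)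
    (hanti₂.isGLB_image_of_cofinal Set.inter_subset_right (fun k _ => hcofinal k) hglb₂)

theorem DStatDecreasing.const_smul {𝕜 : Type*} [Field 𝕜] [LinearOrder 𝕜]
    [IsStrictOrderedRing 𝕜] [Module 𝕜 M] [PosSMulMono 𝕜 M] {z : ℕ → M}
    (h : DStatDecreasing p q z) {c : 𝕜} (hc : 0 ≤ c) : DStatDecreasing p q (fun k => c • z k) := by
  obtain ⟨K, hKinf, hK, hz, hglb⟩ := h
  refine ⟨K, hKinf, hK, fun i hi j hj hij => smul_le_smul_of_nonneg_left (hz i hi j hj hij) hc, ?_⟩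
  simpa using hglb.image_smul_of_nonneg hc hKinf.nonempty

theorem DStatOrderConv.add [AddLeftMono M] (hq : Tendsto q atTop atTop) {x y : ℕ → M}
    {a b : M} (hx : DStatOrderConv p q x a) (hy : DStatOrderConv p q y b) :
    DStatOrderConv p q (fun n => x n + y n) (a + b) := by
  obtain ⟨z₁, hz₁, L₁, -, hL₁, hxa⟩ := hx
  obtain ⟨z₂, hz₂, L₂, -, hL₂, hyb⟩ := hy
  refine ⟨_, hz₁.add hq hz₂, L₁ ∩ L₂, (hL₁.inter hL₂).infinite hq, hL₁.inter hL₂, fun k hk => ?_⟩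
  calc |x k + y k - (a + b)| = |(x k - a) + (y k - b)| := by rw [add_sub_add_comm]
    _ ≤ |x k - a| + |y k - b| := abs_add_le _ _
    _ ≤ z₁ k + z₂ k := add_le_add (hxa k hk.1) (hyb k hk.2)

theorem DStatOrderConv.const_smul {𝕜 : Type*} [Field 𝕜] [LinearOrder 𝕜]
    [IsStrictOrderedRing 𝕜] [Module 𝕜 M] [PosSMulMono 𝕜 M] {x : ℕ → M} {a : M}
    (hx : DStatOrderConv p q x a) (c : 𝕜) :
    DStatOrderConv p q (fun n => c • x n) (c • a) := by
  obtain ⟨z, hz, L, hLinf, hL, hxa⟩ := hx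
  refine ⟨_, hz.const_smul (abs_nonneg c), L, hLinf, hL, fun k hk => ?_⟩
  rw [← smul_sub, abs_smul_of_lattice]
  exact smul_le_smul_of_nonneg_left (hxa k hk) (abs_nonneg c)

end DeferredStatisticalOrder

theorem stmt6 (p q : ℕ → ℕ) (hpq : DeferredProperty p q) (x y : ℕ → E) (a b : E)
    (lam : ℝ) (hx : DStatOrderConv p q x a) (hy : DStatOrderConv p q y b) :
    DStatOrderConv p q (fun n => x n + y n) (a + b) ∧
      DStatOrderConv p q (fun n => lam • x n) (lam • a) :=
  ⟨hx.add hpq.2 hy, hx.const_smul lam⟩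
end

section
/- Let E be a Riesz space and let (p, q) and (p', q') be two pairs of sequences of natural numbers satisfying the deferred property with p_n ≤ p'_n and q'_n ≤ q_n for each n ∈ ℕ. Assume moreover that (p'_n − p_n)/(q_n − p_n) → 0 and (q_n − q'_n)/(q_n − p_n) → 0 as n → ∞ (so that the index gaps {k : p_n < k ≤ p'_n} and {k : q'_n < k ≤ q_n} are negligible). If x_n →^{D_{st_o}}_{p',q'} x in E, then x_n →^{D_{st_o}}_{p,q} x. -/
/-!
The window `(p' n, q' n]` lies inside `(p n, q n]` and, by the two gap conditions, fills a
proportion `(q' n - p' n) / (q n - p n) → 1` of it. Hence the proportion of `K` in the large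
window is squeezed between `1` and the proportion of `K` in the small window times that factor,
so every set of `(p', q')`-density one has `(p, q)`-density one. The witnesses `z` and `K` of
`(p', q')`-convergence then witness `(p, q)`-convergence unchanged.
-/

open Filter Topology

variable {E : Type*} [AddCommGroup E] [Lattice E]
  [CovariantClass E E (· + ·) (· ≤ ·)] [Module ℝ E] [PosSMulMono ℝ E]

section DeferredDensity

variable {p q p' q' : ℕ → ℕ} {K : Set ℕ}

lemma DeferredDensity.eventually_lt {a : ℝ} (hK : DeferredDensity p q K a) (ha : 0 < a) :
    ∀ᶠ n in atTop, p n < q n := by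
  filter_upwards [hK.eventually (lt_mem_nhds ha)] with n hn
  rcases div_pos_iff.mp hn with ⟨-, h⟩ | ⟨h, -⟩
  · exact_mod_cast sub_pos.mp h
  · exact absurd h (Nat.cast_nonneg _).not_gt

lemma deferredRatio_le_one {n : ℕ} (h : p n ≤ q n) : deferredRatio p q K n ≤ 1 := by
  classical
  refine div_le_one_of_le₀ ?_ (sub_nonneg.mpr (by exact_mod_cast h))
  calc (((Finset.Ioc (p n) (q n)).filter (· ∈ K)).card : ℝ)
      ≤ (Finset.Ioc (p n) (q n)).card := by exact_mod_cast Finset.card_filter_le _ _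
    _ = (q n : ℝ) - p n := by rw [Nat.card_Ioc, Nat.cast_sub h]

lemma deferredRatio_mul_le_deferredRatio {n : ℕ} (hp : p n ≤ p' n) (hq : q' n ≤ q n)
    (h' : p' n < q' n) :
    deferredRatio p' q' K n * (((q' n : ℝ) - p' n) / ((q n : ℝ) - p n)) ≤
      deferredRatio p q K n := by
  classical
  have hlen' : ((q' n : ℝ) - p' n) ≠ 0 := (sub_pos.mpr (by exact_mod_cast h')).ne'
  rw [deferredRatio, deferredRatio, div_mul_div_cancel₀ hlen']
  gcongr
  exact sub_nonneg.mpr (by exact_mod_cast (hp.trans h'.le).trans hq)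

lemma tendsto_window_length_ratio (hpq : ∀ᶠ n in atTop, p n < q n)
    (hgap₁ : Tendsto (fun n => ((p' n : ℝ) - p n) / ((q n : ℝ) - p n)) atTop (𝓝 0))
    (hgap₂ : Tendsto (fun n => ((q n : ℝ) - q' n) / ((q n : ℝ) - p n)) atTop (𝓝 0)) :
    Tendsto (fun n => ((q' n : ℝ) - p' n) / ((q n : ℝ) - p n)) atTop (𝓝 1) := by
  have hlim := (tendsto_const_nhds (x := (1 : ℝ))).sub hgap₁ |>.sub hgap₂
  rw [sub_zero, sub_zero] at hlim
  refine hlim.congr' ?_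
  filter_upwards [hpq] with n hn
  have hlen : ((q n : ℝ) - p n) ≠ 0 := (sub_pos.mpr (by exact_mod_cast hn)).ne'
  field_simp
  ring

theorem DeferredDensity.of_subwindow (hp : ∀ n, p n ≤ p' n) (hq : ∀ n, q' n ≤ q n)
    (hgap₁ : Tendsto (fun n => ((p' n : ℝ) - p n) / ((q n : ℝ) - p n)) atTop (𝓝 0))
    (hgap₂ : Tendsto (fun n => ((q n : ℝ) - q' n) / ((q n : ℝ) - p n)) atTop (𝓝 0))
    (hK : DeferredDensity p' q' K 1) : DeferredDensity p q K 1 := by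
  have hwin' := hK.eventually_lt one_pos
  have hwin : ∀ᶠ n in atTop, p n < q n :=
    hwin'.mono fun n h => (hp n).trans_lt (h.trans_le (hq n))
  have hlower := hK.mul (tendsto_window_length_ratio hwin hgap₁ hgap₂)
  rw [mul_one] at hlower
  refine tendsto_of_tendsto_of_tendsto_of_le_of_le' hlower tendsto_const_nhds ?_ ?_
  · filter_upwards [hwin'] with n hn
    exact deferredRatio_mul_le_deferredRatio (hp n) (hq n) hn
  · filter_upwards [hwin] with n hn
    exact deferredRatio_le_one hn.le

end DeferredDensity

theorem stmt16_general (p q p' q' : ℕ → ℕ)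
    (hp : ∀ n, p n ≤ p' n) (hq : ∀ n, q' n ≤ q n)
    (hgap₁ : Tendsto (fun n => ((p' n : ℝ) - (p n : ℝ)) / ((q n : ℝ) - (p n : ℝ)))
      atTop (nhds 0))
    (hgap₂ : Tendsto (fun n => ((q n : ℝ) - (q' n : ℝ)) / ((q n : ℝ) - (p n : ℝ)))
      atTop (nhds 0))
    (x : ℕ → E) (l : E) (hx : DStatOrderConv p' q' x l) :
    DStatOrderConv p q x l := by
  have transfer {K : Set ℕ} : DeferredDensity p' q' K 1 → DeferredDensity p q K 1 :=
    DeferredDensity.of_subwindow hp hq hgap₁ hgap₂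
  obtain ⟨z, ⟨K₀, hK₀, hdens₀, hanti, hglb⟩, K, hK, hdens, hbound⟩ := hx
  exact ⟨z, ⟨K₀, hK₀, transfer hdens₀, hanti, hglb⟩, K, hK, transfer hdens, hbound⟩

theorem stmt16 (p q p' q' : ℕ → ℕ)
    (hpq : DeferredProperty p q) (hpq' : DeferredProperty p' q')
    (hp : ∀ n, p n ≤ p' n) (hq : ∀ n, q' n ≤ q n)
    (hgap₁ : Tendsto (fun n => ((p' n : ℝ) - (p n : ℝ)) / ((q n : ℝ) - (p n : ℝ)))
      atTop (nhds 0))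
    (hgap₂ : Tendsto (fun n => ((q n : ℝ) - (q' n : ℝ)) / ((q n : ℝ) - (p n : ℝ)))
      atTop (nhds 0))
    (x : ℕ → E) (l : E) (hx : DStatOrderConv p' q' x l) :
    DStatOrderConv p q x l :=
  stmt16_general p q p' q' hp hq hgap₁ hgap₂ x l hx
end
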